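/- In the commutative ring R = Z/2[ξ, ξ^{-1}, τσ, u, a] (with ξ invertible), define e1 = a·u·τσ·ξ^{-1}, e2 = a²·τσ·ξ^{-1}, and τ = u²·τσ·ξ^{-1}. Then e1² = e2·τ, and the Z/2-algebra homomorphism Z/2[T, E1, E2]/(E1² - E2·T) → R sending T ↦ τ, E1 ↦ e1, E2 ↦ e2 is injective. -/

import Mathlib

noncomputable section

/-- The field `ℤ/2`. -/
abbrev k2 : Type := ZMod 2

/-- The ring `R = ℤ/2[ξ,ξ⁻¹,τσ,u,a]`: Laurent polynomials in `ξ` over `ℤ/2[τσ,u,a]`,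
with variables `0 = τσ`, `1 = u`, `2 = a`. -/
abbrev R10 : Type := LaurentPolynomial (MvPolynomial (Fin 3) k2)

open MvPolynomial LaurentPolynomial

/-- `ξ`. -/
def ξ10 : R10 := T 1

/-- `e₁ = a·u·τσ·ξ⁻¹`. -/
def e110 : R10 := LaurentPolynomial.C (X 2 * X 1 * X 0) * T (-1)

/-- `e₂ = a²·τσ·ξ⁻¹`. -/
def e210 : R10 := LaurentPolynomial.C (X 2 ^ 2 * X 0) * T (-1)

/-- `τ = u²·τσ·ξ⁻¹`. -/
def τ10 : R10 := LaurentPolynomial.C (X 1 ^ 2 * X 0) * T (-1)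

/-- The ideal `(E₁² - E₂T)` of `ℤ/2[T,E₁,E₂]`, with variables `0 = T`, `1 = E₁`, `2 = E₂`. -/
abbrev I10 : Ideal (MvPolynomial (Fin 3) k2) :=
  Ideal.span {X 1 ^ 2 - X 2 * X 0}

/-- The ring `ℤ/2[T,E₁,E₂]/(E₁² - E₂T)`. -/
abbrev A10 : Type := MvPolynomial (Fin 3) k2 ⧸ I10

/-! Sending `τσ` and `ξ` to `1`, `u` to `x` and `a` to `y` maps `R` onto `ℤ/2[x,y]`, and the
composite with the map of the theorem is the Veronese map `T ↦ x²`, `E₁ ↦ xy`, `E₂ ↦ y²`. This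
map is injective modulo `E₁² - E₂T`: sending a monomial `xⁱyʲ` with `i ≡ j [MOD 2]` to
`T^(i/2) E₁^(i%2) E₂^(j/2)` (and the others to `0`) gives a linear left inverse, because modulo
`E₁² = E₂T` every monomial `TᵃE₁ᵇE₂ᶜ` equals `T^(a + b/2) E₁^(b%2) E₂^(b/2 + c)`. -/
section Veronese

variable {K : Type*} [CommRing K]

variable (K) in
abbrev veroneseRel : Ideal (MvPolynomial (Fin 3) K) := Ideal.span {X 1 ^ 2 - X 2 * X 0}

def veronese : MvPolynomial (Fin 3) K →ₐ[K] MvPolynomial (Fin 2) K :=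
  aeval ![X 0 ^ 2, X 0 * X 1, X 1 ^ 2]

lemma veronese_monomial_one (u : Fin 3 →₀ ℕ) :
    veronese (monomial u (1 : K)) =
      monomial (Finsupp.single 0 (2 * u 0 + u 1) + Finsupp.single 1 (u 1 + 2 * u 2)) 1 := by
  simp [veronese, monomial_eq, Finsupp.prod_pow, Fin.prod_univ_three]
  ring

lemma veroneseRel_mk_X_one_sq :
    Ideal.Quotient.mk (veroneseRel K) (X 1 ^ 2) =
      Ideal.Quotient.mk (veroneseRel K) (X 2 * X 0) := by
  rw [Ideal.Quotient.mk_eq_mk_iff_sub_mem]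
  exact Ideal.subset_span rfl

lemma veroneseRel_mk_X_one_pow (n : ℕ) : Ideal.Quotient.mk (veroneseRel K) (X 1 ^ n) =
    Ideal.Quotient.mk (veroneseRel K) (X 1 ^ (n % 2) * (X 2 * X 0) ^ (n / 2)) := by
  conv_lhs => rw [← Nat.mod_add_div n 2]
  rw [pow_add, pow_mul, map_mul, map_pow _ (X 1 ^ 2), veroneseRel_mk_X_one_sq, ← map_pow, ← map_mul]

lemma veroneseRel_mk_monomial_one (u : Fin 3 →₀ ℕ) :
    Ideal.Quotient.mk (veroneseRel K) (monomial u 1) = Ideal.Quotient.mk (veroneseRel K)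
      (X 0 ^ (u 0 + u 1 / 2) * X 1 ^ (u 1 % 2) * X 2 ^ (u 1 / 2 + u 2)) := by
  rw [monomial_eq, C_1, one_mul, Finsupp.prod_pow, Fin.prod_univ_three,
    mul_right_comm (X 0 ^ u 0), map_mul _ (X 0 ^ u 0 * X 2 ^ u 2), veroneseRel_mk_X_one_pow,
    ← map_mul]
  congr 1
  ring

def veroneseMonomialPreimage (v : Fin 2 →₀ ℕ) : MvPolynomial (Fin 3) K ⧸ veroneseRel K :=
  if v 0 % 2 = v 1 % 2 then
    Ideal.Quotient.mk (veroneseRel K) (X 0 ^ (v 0 / 2) * X 1 ^ (v 0 % 2) * X 2 ^ (v 1 / 2))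
  else 0

def veroneseRetract : MvPolynomial (Fin 2) K →ₗ[K] MvPolynomial (Fin 3) K ⧸ veroneseRel K :=
  (basisMonomials (Fin 2) K).constr K veroneseMonomialPreimage

lemma veroneseRetract_monomial_one (v : Fin 2 →₀ ℕ) :
    veroneseRetract (monomial v (1 : K)) = veroneseMonomialPreimage v := by
  simpa [veroneseRetract] using (basisMonomials (Fin 2) K).constr_basis K veroneseMonomialPreimage v

lemma veroneseRetract_veronese (p : MvPolynomial (Fin 3) K) :
    veroneseRetract (veronese p) = Ideal.Quotient.mk (veroneseRel K) p := by
  suffices h : veroneseRetract ∘ₗ veronese.toLinearMap =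
      (Ideal.Quotient.mkₐ K (veroneseRel K)).toLinearMap from
    LinearMap.congr_fun h p
  refine (basisMonomials (Fin 3) K).ext fun u => ?_
  simp only [coe_basisMonomials, LinearMap.coe_comp, Function.comp_apply,
    AlgHom.toLinearMap_apply, Ideal.Quotient.mkₐ_eq_mk, veronese_monomial_one,
    veroneseRetract_monomial_one, veroneseMonomialPreimage]
  simp only [Finsupp.coe_add, Pi.add_apply, Finsupp.single_eq_same, ne_eq, zero_ne_one,
    not_false_eq_true, Finsupp.single_eq_of_ne, one_ne_zero, add_zero, zero_add]
  rw [if_pos (by omega), veroneseRel_mk_monomial_one]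
  congr 4 <;> omega

def veroneseLift : (MvPolynomial (Fin 3) K ⧸ veroneseRel K) →ₐ[K] MvPolynomial (Fin 2) K :=
  Ideal.Quotient.liftₐ (veroneseRel K) veronese fun a ha => by
    obtain ⟨b, rfl⟩ := Ideal.mem_span_singleton'.mp ha
    simp [veronese]
    ring

lemma veroneseLift_mk (p : MvPolynomial (Fin 3) K) :
    veroneseLift (Ideal.Quotient.mk (veroneseRel K) p) = veronese p :=
  rfl

lemma veroneseLift_injective : Function.Injective (veroneseLift (K := K)) := by
  intro x y h
  obtain ⟨p, rfl⟩ := Ideal.Quotient.mk_surjective x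
  obtain ⟨q, rfl⟩ := Ideal.Quotient.mk_surjective y
  rw [← veroneseRetract_veronese p, ← veroneseRetract_veronese q, ← veroneseLift_mk,
    ← veroneseLift_mk, h]

end Veronese

def specialization : R10 →+* MvPolynomial (Fin 2) k2 :=
  LaurentPolynomial.eval₂ (aeval ![1, X 0, X 1]).toRingHom 1

lemma e110_sq : e110 ^ 2 = e210 * τ10 := by
  rw [e110, e210, τ10, mul_pow, ← map_pow, mul_mul_mul_comm, ← map_mul, ← T_add, T_pow]
  congr 2
  ring

def embedding : A10 →ₐ[k2] R10 :=
  Ideal.Quotient.liftₐ I10 (aeval ![τ10, e110, e210]) fun a ha => by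
    obtain ⟨b, rfl⟩ := Ideal.mem_span_singleton'.mp ha
    simp [e110_sq]

lemma embedding_mk (p : MvPolynomial (Fin 3) k2) :
    embedding (Ideal.Quotient.mk I10 p) = aeval ![τ10, e110, e210] p :=
  rfl

lemma specialization_embedding (x : A10) : specialization (embedding x) = veroneseLift x := by
  obtain ⟨p, rfl⟩ := Ideal.Quotient.mk_surjective x
  rw [embedding_mk, veroneseLift_mk]
  suffices h : specialization.comp (aeval ![τ10, e110, e210]).toRingHom = veronese.toRingHom from
    RingHom.congr_fun h p
  refine MvPolynomial.ringHom_ext (fun c => by simp [specialization]) fun i => ?_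
  fin_cases i <;> simp [specialization, veronese, τ10, e110, e210,
    mul_comm (X 1 : MvPolynomial (Fin 2) k2)]

set_option synthInstance.maxHeartbeats 1000000 in
/-- in `R = ℤ/2[ξ,ξ⁻¹,τσ,u,a]`, with `e₁ = auτσξ⁻¹`, `e₂ = a²τσξ⁻¹` and
`τ = u²τσξ⁻¹`, we have `e₁² = e₂τ`, and the `ℤ/2`-algebra homomorphism
`ℤ/2[T,E₁,E₂]/(E₁² - E₂T) → R` sending `T ↦ τ`, `E₁ ↦ e₁`, `E₂ ↦ e₂` is injective. -/
theorem stmt10 :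
    e110 ^ 2 = e210 * τ10 ∧
    ∃ f : A10 →ₐ[k2] R10,
      f (Ideal.Quotient.mk I10 (X 0)) = τ10 ∧
      f (Ideal.Quotient.mk I10 (X 1)) = e110 ∧
      f (Ideal.Quotient.mk I10 (X 2)) = e210 ∧
      Function.Injective f := by
  refine ⟨e110_sq, embedding, by simp [embedding_mk], by simp [embedding_mk],
    by simp [embedding_mk], fun x y h => veroneseLift_injective ?_⟩
  rw [← specialization_embedding, ← specialization_embedding, h]
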